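/- arXiv:1307.3583 — 3 statements merged into one kernel-verified Lean document; each statement's English description precedes it below -/
import Mathlib

section
/- For every real x, the improper integral (1/π)·∫₀^∞ cos(t³/3 + x·t) dt converges (as the limit of ∫₀^R as R → ∞); the resulting function Ai : ℝ → ℝ (the Airy function of the first kind) is twice differentiable and satisfies the Airy differential equation Ai''(x) = x·Ai(x) for all x ∈ ℝ. -/
/-!
Write `φₓ(t) = t³/3 + x t`, so that `∂ₜφₓ = t² + x ≥ t²/2` once `t² ≥ 2|x|`. On `[R, R']` the
integrands `cos φₓ = (t² + x)⁻¹ · ∂ₜ(sin φₓ)` and `t sin φₓ = t/(t² + x) · ∂ₜ(-cos φₓ)` are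
bounded oscillations against decreasing nonnegative weights, so one integration by parts bounds
their tails by `4/R²` and `4/R`, uniformly for `x` in a compact set. Hence
`A_R(x) = ∫₀^R cos φₓ` and its `x`-derivative `-∫₀^R t sin φₓ` converge locally uniformly, and
`π Ai' = -∫₀^∞ t sin φₓ`. Differentiating once more,
`∂ₓ ∫₀^R t sin φₓ = ∫₀^R t² cos φₓ = sin φₓ(R) - x A_R(x)` because `(t² + x) cos φₓ = ∂ₜ sin φₓ`.
The boundary term has no limit, but it is `-∂ₓ (cos φₓ(R) / R)` and `cos φₓ(R) / R → 0`; so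
`∫₀^R t sin φₓ + cos φₓ(R) / R` has locally uniformly convergent derivatives `-x A_R(x)`, and
`π Ai'' = x π Ai`.
-/

open MeasureTheory Filter Set

/-- The Airy function of the first kind, defined as
`Ai(x) = (1/π) · lim_{R→∞} ∫₀^R cos(t³/3 + x·t) dt`. -/
noncomputable def Ai (x : ℝ) : ℝ :=
  (1 / Real.pi) *
    limUnder Filter.atTop (fun R : ℝ => ∫ t in (0:ℝ)..R, Real.cos (t ^ 3 / 3 + x * t))

open Topology intervalIntegral

section

variable {E : Type*} [NormedAddCommGroup E] [NormedSpace ℝ E]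

theorem tendstoUniformlyOn_limUnder_intervalIntegral_of_tail_le {α : Type*} [CompleteSpace E]
    {f : α → ℝ → E} {s : Set α} {a : ℝ} {ε : ℝ → ℝ}
    (hf : ∀ x ∈ s, LocallyIntegrable (f x)) (hε : Tendsto ε atTop (𝓝 0))
    (htail : ∀ᶠ R in atTop, ∀ R' ≥ R, ∀ x ∈ s, ‖∫ t in R..R', f x t‖ ≤ ε R) :
    TendstoUniformlyOn (fun R x => ∫ t in a..R, f x t)
      (fun x => limUnder atTop fun R => ∫ t in a..R, f x t) atTop s := by
  have hcauchy : UniformCauchySeqOn (fun R x => ∫ t in a..R, f x t) atTop s := by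
    rw [Metric.uniformCauchySeqOn_iff]
    intro δ hδ
    obtain ⟨N, hN⟩ := eventually_atTop.1 (htail.and (hε.eventually (gt_mem_nhds hδ)))
    have hordered : ∀ m ≥ N, ∀ n ≥ m, ∀ x ∈ s,
        dist (∫ t in a..m, f x t) (∫ t in a..n, f x t) < δ := by
      intro m hm n hmn x hx
      have hint : ∀ b, IntervalIntegrable (f x) volume a b := fun b =>
        ((hf x hx).integrableOn_isCompact isCompact_uIcc).intervalIntegrable
      rw [dist_eq_norm', integral_interval_sub_left (hint n) (hint m)]
      exact ((hN m hm).1 n hmn x hx).trans_lt (hN m hm).2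
    refine ⟨N, fun m hm n hn x hx => ?_⟩
    rcases le_total m n with hmn | hnm
    · exact hordered m hm n hmn x hx
    · rw [dist_comm]
      exact hordered n hn m hnm x hx
  refine hcauchy.tendstoUniformlyOn_of_tendsto fun x hx => ?_
  obtain ⟨L, hL⟩ := cauchySeq_tendsto_of_complete (hcauchy.cauchySeq hx)
  exact tendsto_nhds_limUnder ⟨L, hL⟩

theorem hasDerivAt_intervalIntegral_of_continuous {F F' : ℝ → ℝ → E} {a b x₀ : ℝ}
    (hF : ∀ x, Continuous (F x)) (hF' : Continuous (Function.uncurry F'))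
    (hderiv : ∀ x t, HasDerivAt (fun x => F x t) (F' x t) x) :
    HasDerivAt (fun x => ∫ t in a..b, F x t) (∫ t in a..b, F' x₀ t) x₀ := by
  obtain ⟨C, hC⟩ := ((isCompact_closedBall x₀ 1).prod isCompact_uIcc).exists_bound_of_continuousOn
    (hF'.continuousOn (s := Metric.closedBall x₀ 1 ×ˢ uIcc a b))
  exact (hasDerivAt_integral_of_dominated_loc_of_deriv_le (bound := fun _ => C)
    (Metric.closedBall_mem_nhds x₀ one_pos)
    (Eventually.of_forall fun x => (hF x).aestronglyMeasurable)
    ((hF x₀).intervalIntegrable a b) (hF'.comp (Continuous.prodMk_right x₀)).aestronglyMeasurable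
    (ae_of_all _ fun t ht x hx => hC (x, t) ⟨hx, uIoc_subset_uIcc ht⟩)
    intervalIntegrable_const (ae_of_all _ fun t _ x _ => hderiv x t)).2

end

theorem TendstoUniformlyOn.mul_left_of_norm_le {ι α R : Type*} [SeminormedRing R] {l : Filter ι}
    {F : ι → α → R} {f c : α → R} {s : Set α} {C : ℝ} (h : TendstoUniformlyOn F f l s)
    (hc : ∀ x ∈ s, ‖c x‖ ≤ C) :
    TendstoUniformlyOn (fun n x => c x * F n x) (fun x => c x * f x) l s := by
  rw [Metric.tendstoUniformlyOn_iff] at h ⊢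
  intro ε hε
  have hC : 0 < |C| + 1 := by positivity
  filter_upwards [h (ε / (|C| + 1)) (div_pos hε hC)] with n hn x hx
  calc dist (c x * f x) (c x * F n x) = ‖c x * (f x - F n x)‖ := by rw [dist_eq_norm, mul_sub]
    _ ≤ (|C| + 1) * dist (f x) (F n x) := by
        rw [dist_eq_norm]
        refine (norm_mul_le _ _).trans (mul_le_mul_of_nonneg_right ?_ (norm_nonneg _))
        linarith [hc x hx, le_abs_self C]
    _ < (|C| + 1) * (ε / (|C| + 1)) := by gcongr; exact hn x hx
    _ = ε := by field_simp

/-- Integrating by parts, the remainder `∫ w' G` is at most `C` times the total variation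
`w a - w b` of the monotone weight. -/
theorem abs_integral_mul_deriv_le_of_deriv_nonpos {w w' G G' : ℝ → ℝ} {a b C : ℝ} (hab : a ≤ b)
    (hw : ∀ t ∈ Icc a b, HasDerivAt w (w' t) t) (hG : ∀ t ∈ Icc a b, HasDerivAt G (G' t) t)
    (hw'_int : IntervalIntegrable w' volume a b) (hG'_int : IntervalIntegrable G' volume a b)
    (hw'_nonpos : ∀ t ∈ Icc a b, w' t ≤ 0) (hwb : 0 ≤ w b) (hG_le : ∀ t ∈ Icc a b, |G t| ≤ C) :
    |∫ t in a..b, w t * G' t| ≤ 2 * C * w a := by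
  rw [← uIcc_of_le hab] at hw hG
  have hftc : ∫ t in a..b, w' t = w b - w a := integral_eq_sub_of_hasDerivAt hw hw'_int
  have hwa : w b ≤ w a := by
    have : 0 ≤ ∫ t in a..b, -w' t :=
      integral_nonneg hab fun t ht => neg_nonneg.2 (hw'_nonpos t ht)
    rw [intervalIntegral.integral_neg, hftc] at this
    linarith
  have hGcont : ContinuousOn G (uIcc a b) := fun t ht => (hG t ht).continuousAt.continuousWithinAt
  have hremainder : |∫ t in a..b, w' t * G t| ≤ C * (w a - w b) := calc
    |∫ t in a..b, w' t * G t| ≤ ∫ t in a..b, |w' t * G t| := abs_integral_le_integral_abs hab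
    _ ≤ ∫ t in a..b, C * -w' t := by
        refine integral_mono_on hab (hw'_int.mul_continuousOn hGcont).abs
          (hw'_int.neg.const_mul C) fun t ht => ?_
        rw [abs_mul, abs_of_nonpos (hw'_nonpos t ht), mul_comm]
        exact mul_le_mul_of_nonneg_right (hG_le t ht) (neg_nonneg.2 (hw'_nonpos t ht))
    _ = C * (w a - w b) := by
        rw [intervalIntegral.integral_const_mul, intervalIntegral.integral_neg, hftc]
        ring
  have hboundary : ∀ t ∈ Icc a b, 0 ≤ w t → |w t * G t| ≤ C * w t := fun t ht hwt => by
    rw [abs_mul, abs_of_nonneg hwt, mul_comm]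
    exact mul_le_mul_of_nonneg_right (hG_le t ht) hwt
  have hb := hboundary b ⟨hab, le_rfl⟩ hwb
  have ha := hboundary a ⟨le_rfl, hab⟩ (hwb.trans hwa)
  rw [integral_mul_deriv_eq_deriv_mul hw hG hw'_int hG'_int]
  rw [abs_le] at ha hb hremainder ⊢
  constructor <;> linarith

lemma hasDerivAt_airyPhase (x t : ℝ) :
    HasDerivAt (fun t => t ^ 3 / 3 + x * t) (t ^ 2 + x) t :=
  (((hasDerivAt_pow 3 t).div_const 3).add ((hasDerivAt_id' t).const_mul x)).congr_deriv
    (by norm_num)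

lemma half_sq_le_sq_add_of_le {x R t : ℝ} (hR : 0 ≤ R) (hxR : 2 * |x| ≤ R ^ 2) (ht : R ≤ t) :
    t ^ 2 / 2 ≤ t ^ 2 + x := by
  have := pow_le_pow_left₀ hR ht 2
  have := neg_abs_le x
  linarith

lemma sq_add_pos_of_le {x R t : ℝ} (hR : 0 < R) (hxR : 2 * |x| ≤ R ^ 2) (ht : R ≤ t) :
    0 < t ^ 2 + x := by
  nlinarith [half_sq_le_sq_add_of_le hR.le hxR ht, hR.trans_le ht]

lemma abs_integral_cos_airyPhase_le {x R R' : ℝ} (hR : 0 < R) (hxR : 2 * |x| ≤ R ^ 2)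
    (hRR' : R ≤ R') : |∫ t in R..R', Real.cos (t ^ 3 / 3 + x * t)| ≤ 4 / R ^ 2 := by
  have hpos : ∀ t ∈ Icc R R', 0 < t ^ 2 + x := fun t ht => sq_add_pos_of_le hR hxR ht.1
  have hw'_cont : ContinuousOn (fun t => -(2 * t) / (t ^ 2 + x) ^ 2) (uIcc R R') := by
    rw [uIcc_of_le hRR']
    exact ContinuousOn.div (by fun_prop) (by fun_prop) fun t ht => (pow_pos (hpos t ht) 2).ne'
  have hibp := abs_integral_mul_deriv_le_of_deriv_nonpos (w := fun t => (t ^ 2 + x)⁻¹)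
    (G := fun t => Real.sin (t ^ 3 / 3 + x * t)) hRR'
    (fun t ht => (((hasDerivAt_pow 2 t).add_const x).inv (hpos t ht).ne').congr_deriv
      (by norm_num))
    (fun t _ => (hasDerivAt_airyPhase x t).sin) hw'_cont.intervalIntegrable
    (by apply Continuous.intervalIntegrable; fun_prop)
    (fun t ht => div_nonpos_of_nonpos_of_nonneg (by linarith [hR.trans_le ht.1]) (sq_nonneg _))
    (inv_nonneg.2 (hpos R' ⟨hRR', le_rfl⟩).le) (fun t _ => Real.abs_sin_le_one _)
  have hintegrand : ∀ t ∈ uIcc R R', (t ^ 2 + x)⁻¹ * (Real.cos (t ^ 3 / 3 + x * t) * (t ^ 2 + x))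
      = Real.cos (t ^ 3 / 3 + x * t) := fun t ht => by
    rw [uIcc_of_le hRR'] at ht
    field_simp [(hpos t ht).ne']
  rw [integral_congr hintegrand] at hibp
  have hR2 := half_sq_le_sq_add_of_le hR.le hxR le_rfl
  calc _ ≤ 2 * 1 * (R ^ 2 + x)⁻¹ := hibp
    _ ≤ 4 / R ^ 2 := by
      rw [mul_one, ← div_eq_mul_inv, div_le_div_iff₀ (hpos R ⟨le_rfl, hRR'⟩) (by positivity)]
      linarith

lemma abs_integral_mul_sin_airyPhase_le {x R R' : ℝ} (hR : 0 < R) (hxR : 2 * |x| ≤ R ^ 2)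
    (hRR' : R ≤ R') : |∫ t in R..R', t * Real.sin (t ^ 3 / 3 + x * t)| ≤ 4 / R := by
  have hpos : ∀ t ∈ Icc R R', 0 < t ^ 2 + x := fun t ht => sq_add_pos_of_le hR hxR ht.1
  have hw'_cont : ContinuousOn (fun t => (x - t ^ 2) / (t ^ 2 + x) ^ 2) (uIcc R R') := by
    rw [uIcc_of_le hRR']
    exact ContinuousOn.div (by fun_prop) (by fun_prop) fun t ht => (pow_pos (hpos t ht) 2).ne'
  have hibp := abs_integral_mul_deriv_le_of_deriv_nonpos (w := fun t => t / (t ^ 2 + x))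
    (G := fun t => -Real.cos (t ^ 3 / 3 + x * t)) hRR'
    (fun t ht => ((hasDerivAt_id' t).div ((hasDerivAt_pow 2 t).add_const x)
      (hpos t ht).ne').congr_deriv (by ring))
    (fun t _ => (hasDerivAt_airyPhase x t).cos.neg) hw'_cont.intervalIntegrable
    (by apply Continuous.intervalIntegrable; fun_prop)
    (fun t ht => div_nonpos_of_nonpos_of_nonneg
      (by linarith [pow_le_pow_left₀ hR.le ht.1 2, le_abs_self x, sq_nonneg R]) (sq_nonneg _))
    (div_nonneg (hR.le.trans hRR') (hpos R' ⟨hRR', le_rfl⟩).le)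
    (fun t _ => by rw [abs_neg]; exact Real.abs_cos_le_one _)
  have hintegrand : ∀ t ∈ uIcc R R', t / (t ^ 2 + x) *
      -(-Real.sin (t ^ 3 / 3 + x * t) * (t ^ 2 + x)) = t * Real.sin (t ^ 3 / 3 + x * t) :=
    fun t ht => by
      rw [uIcc_of_le hRR'] at ht
      field_simp [(hpos t ht).ne']
  rw [integral_congr hintegrand] at hibp
  have hR2 := half_sq_le_sq_add_of_le hR.le hxR le_rfl
  calc _ ≤ 2 * 1 * (R / (R ^ 2 + x)) := hibp
    _ ≤ 4 / R := by
      rw [mul_one, mul_div_assoc', div_le_div_iff₀ (hpos R ⟨le_rfl, hRR'⟩) hR]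
      nlinarith

noncomputable def airyCosIntegral (x : ℝ) : ℝ :=
  limUnder atTop fun R => ∫ t in (0:ℝ)..R, Real.cos (t ^ 3 / 3 + x * t)

noncomputable def airyMulSinIntegral (x : ℝ) : ℝ :=
  limUnder atTop fun R => ∫ t in (0:ℝ)..R, t * Real.sin (t ^ 3 / 3 + x * t)

lemma eventually_two_mul_abs_le_sq (M : ℝ) :
    ∀ᶠ R in atTop, 0 < R ∧ ∀ x ∈ Icc (-M) M, 2 * |x| ≤ R ^ 2 := by
  filter_upwards [eventually_ge_atTop (max 1 (2 * M))] with R hR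
  have h1 := (le_max_left _ _).trans hR
  have h2 := (le_max_right _ _).trans hR
  refine ⟨by linarith, fun x hx => ?_⟩
  nlinarith [abs_le.2 hx]

lemma tendstoUniformlyOn_integral_cos_airyPhase (M : ℝ) :
    TendstoUniformlyOn (fun R x => ∫ t in (0:ℝ)..R, Real.cos (t ^ 3 / 3 + x * t))
      airyCosIntegral atTop (Icc (-M) M) :=
  tendstoUniformlyOn_limUnder_intervalIntegral_of_tail_le
    (fun x _ => (by fun_prop : Continuous _).locallyIntegrable)
    (tendsto_const_nhds.div_atTop (tendsto_pow_atTop two_ne_zero))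
    (by
      filter_upwards [eventually_two_mul_abs_le_sq M] with R ⟨hR, hxR⟩ R' hRR' x hx
      exact abs_integral_cos_airyPhase_le hR (hxR x hx) hRR')

lemma tendstoUniformlyOn_integral_mul_sin_airyPhase (M : ℝ) :
    TendstoUniformlyOn (fun R x => ∫ t in (0:ℝ)..R, t * Real.sin (t ^ 3 / 3 + x * t))
      airyMulSinIntegral atTop (Icc (-M) M) :=
  tendstoUniformlyOn_limUnder_intervalIntegral_of_tail_le
    (fun x _ => (by fun_prop : Continuous _).locallyIntegrable)
    (tendsto_const_nhds.div_atTop tendsto_id)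
    (by
      filter_upwards [eventually_two_mul_abs_le_sq M] with R ⟨hR, hxR⟩ R' hRR' x hx
      exact abs_integral_mul_sin_airyPhase_le hR (hxR x hx) hRR')

lemma tendsto_integral_cos_airyPhase (x : ℝ) :
    Tendsto (fun R => ∫ t in (0:ℝ)..R, Real.cos (t ^ 3 / 3 + x * t)) atTop
      (𝓝 (airyCosIntegral x)) :=
  (tendstoUniformlyOn_integral_cos_airyPhase |x|).tendsto_at (abs_le.1 le_rfl)

lemma tendsto_integral_mul_sin_airyPhase (x : ℝ) :
    Tendsto (fun R => ∫ t in (0:ℝ)..R, t * Real.sin (t ^ 3 / 3 + x * t)) atTop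
      (𝓝 (airyMulSinIntegral x)) :=
  (tendstoUniformlyOn_integral_mul_sin_airyPhase |x|).tendsto_at (abs_le.1 le_rfl)

lemma hasDerivAt_integral_cos_airyPhase (R x : ℝ) :
    HasDerivAt (fun x => ∫ t in (0:ℝ)..R, Real.cos (t ^ 3 / 3 + x * t))
      (-∫ t in (0:ℝ)..R, t * Real.sin (t ^ 3 / 3 + x * t)) x := by
  rw [← intervalIntegral.integral_neg]
  exact hasDerivAt_intervalIntegral_of_continuous
    (F' := fun x t => -(t * Real.sin (t ^ 3 / 3 + x * t))) (by fun_prop) (by fun_prop)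
    fun x t => ((hasDerivAt_mul_const t).const_add (t ^ 3 / 3)).cos.congr_deriv (by ring)

lemma integral_sq_mul_cos_airyPhase (R x : ℝ) :
    ∫ t in (0:ℝ)..R, t ^ 2 * Real.cos (t ^ 3 / 3 + x * t)
      = Real.sin (R ^ 3 / 3 + x * R) - x * ∫ t in (0:ℝ)..R, Real.cos (t ^ 3 / 3 + x * t) := by
  have hftc : ∫ t in (0:ℝ)..R, Real.cos (t ^ 3 / 3 + x * t) * (t ^ 2 + x)
      = Real.sin (R ^ 3 / 3 + x * R) := by
    simpa using integral_eq_sub_of_hasDerivAt (fun t _ => (hasDerivAt_airyPhase x t).sin)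
      (Continuous.intervalIntegrable (by fun_prop) 0 R)
  rw [← hftc, ← intervalIntegral.integral_const_mul, ← intervalIntegral.integral_sub
    ((by fun_prop : Continuous _).intervalIntegrable 0 R)
    ((by fun_prop : Continuous _).intervalIntegrable 0 R)]
  congr 1
  ext t
  ring

lemma hasDerivAt_integral_mul_sin_airyPhase (R x : ℝ) :
    HasDerivAt (fun x => ∫ t in (0:ℝ)..R, t * Real.sin (t ^ 3 / 3 + x * t))
      (Real.sin (R ^ 3 / 3 + x * R) - x * ∫ t in (0:ℝ)..R, Real.cos (t ^ 3 / 3 + x * t)) x := by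
  rw [← integral_sq_mul_cos_airyPhase]
  exact hasDerivAt_intervalIntegral_of_continuous
    (F' := fun x t => t ^ 2 * Real.cos (t ^ 3 / 3 + x * t)) (by fun_prop) (by fun_prop)
    fun x t => (((hasDerivAt_mul_const t).const_add (t ^ 3 / 3)).sin.const_mul t).congr_deriv
      (by ring)

lemma hasDerivAt_integral_mul_sin_airyPhase_add_cos_div (R x : ℝ) (hR : R ≠ 0) :
    HasDerivAt
      (fun x => (∫ t in (0:ℝ)..R, t * Real.sin (t ^ 3 / 3 + x * t))
        + Real.cos (R ^ 3 / 3 + x * R) / R)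
      (-(x * ∫ t in (0:ℝ)..R, Real.cos (t ^ 3 / 3 + x * t))) x :=
  ((hasDerivAt_integral_mul_sin_airyPhase R x).add
    (((hasDerivAt_mul_const R).const_add _).cos.div_const R)).congr_deriv (by field_simp; ring)

lemma tendsto_cos_div_atTop (f : ℝ → ℝ) : Tendsto (fun R => Real.cos (f R) / R) atTop (𝓝 0) := by
  refine squeeze_zero_norm' ?_ tendsto_inv_atTop_zero
  filter_upwards [eventually_gt_atTop 0] with R hR
  rw [norm_div, Real.norm_eq_abs, Real.norm_of_nonneg hR.le, ← one_div]
  exact div_le_div_of_nonneg_right (Real.abs_cos_le_one _) hR.le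

lemma hasDerivAt_airyCosIntegral (x : ℝ) :
    HasDerivAt airyCosIntegral (-airyMulSinIntegral x) x :=
  hasDerivAt_of_tendstoUniformlyOn isOpen_Ioo
    ((tendstoUniformlyOn_integral_mul_sin_airyPhase (|x| + 1)).neg.mono Ioo_subset_Icc_self)
    (Eventually.of_forall fun R y _ => hasDerivAt_integral_cos_airyPhase R y)
    (fun y _ => tendsto_integral_cos_airyPhase y) (abs_lt.1 (lt_add_one _))

lemma hasDerivAt_airyMulSinIntegral (x : ℝ) :
    HasDerivAt airyMulSinIntegral (-(x * airyCosIntegral x)) x :=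
  hasDerivAt_of_tendstoUniformlyOn isOpen_Ioo
    (((tendstoUniformlyOn_integral_cos_airyPhase (|x| + 1)).mul_left_of_norm_le (c := id)
      fun y hy => abs_le.2 hy).neg.mono Ioo_subset_Icc_self)
    ((eventually_ne_atTop 0).mono fun R hR y _ =>
      hasDerivAt_integral_mul_sin_airyPhase_add_cos_div R y hR)
    (fun y _ => by
      simpa using (tendsto_integral_mul_sin_airyPhase y).add (tendsto_cos_div_atTop _))
    (abs_lt.1 (lt_add_one _))

/-- For every real `x`, the improper integral `(1/π)·∫₀^∞ cos(t³/3 + x·t) dt` converges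
(as the limit of `∫₀^R` as `R → ∞`); the resulting function `Ai` is twice differentiable
and satisfies the Airy differential equation `Ai''(x) = x·Ai(x)` for all `x`. -/
theorem airy_integral_converges_and_solves_airy_ode :
    (∀ x : ℝ, Filter.Tendsto
        (fun R : ℝ => (1 / Real.pi) * ∫ t in (0:ℝ)..R, Real.cos (t ^ 3 / 3 + x * t))
        Filter.atTop (nhds (Ai x))) ∧
    Differentiable ℝ Ai ∧ Differentiable ℝ (deriv Ai) ∧
    (∀ x : ℝ, deriv (deriv Ai) x = x * Ai x) := by
  have hAi : Ai = fun x => 1 / Real.pi * airyCosIntegral x := rfl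
  have hAi' : ∀ x, HasDerivAt Ai (-(1 / Real.pi * airyMulSinIntegral x)) x := fun x => by
    rw [hAi]
    exact ((hasDerivAt_airyCosIntegral x).const_mul _).congr_deriv (by ring)
  have hderiv : deriv Ai = fun x => -(1 / Real.pi * airyMulSinIntegral x) :=
    funext fun x => (hAi' x).deriv
  have hAi'' : ∀ x, HasDerivAt (deriv Ai) (x * Ai x) x := fun x => by
    rw [hderiv, hAi]
    exact ((hasDerivAt_airyMulSinIntegral x).const_mul _).neg.congr_deriv (by ring)
  exact ⟨fun x => (tendsto_integral_cos_airyPhase x).const_mul _,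
    fun x => (hAi' x).differentiableAt, fun x => (hAi'' x).differentiableAt,
    fun x => (hAi'' x).deriv⟩
end

section
/- For every a < 0 with Ai(a) = 0 and every x ≥ 0, one has |Ai(x + a)| ≤ x·|Ai'(a)|. Equivalently, for each zero −αₙ of Ai, the normalized eigenfunction ψₙ(x) = Ai(x − αₙ)/|Ai'(−αₙ)| satisfies |ψₙ(x)| ≤ x for all x ≥ 0. -/
/-!
Shifting the contour to the line `Im z = 1` writes `π Ai(x)` as the real part of
`∫ e^{i(z³/3 + xz)}` over `z = s + i`, `s > 0`, whose integrand is bounded by `e^{1/3 - x - s²}`.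
This justifies differentiating under the integral, gives `Ai'' = x Ai`, and shows that `Ai` and
`Ai'` vanish at `+∞`.

The rest uses only the Airy equation. The energy `Ai'² - t Ai²` decreases, so `|Ai'| ≤ |Ai'(a)|`
on `[a, 0]` when `Ai(a) = 0`, and the mean value theorem gives `|Ai(c)| ≤ |Ai'(a)| (c - a)` there.
On `[0, ∞)` the product `Ai Ai'` increases to its limit `0`, so `|Ai|` decreases, which carries
the bound beyond `0`.
-/

open MeasureTheory Filter Set

open Complex Topology

noncomputable def airyKernel (x : ℝ) (z : ℂ) : ℂ := cexp (I * (z ^ 3 / 3 + x * z))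

@[fun_prop]
lemma continuous_airyKernel (x : ℝ) : Continuous (airyKernel x) := by
  unfold airyKernel; fun_prop

lemma norm_airyKernel (x s u : ℝ) :
    ‖airyKernel x (s + u * I)‖ = Real.exp (u ^ 3 / 3 - s ^ 2 * u - x * u) := by
  rw [airyKernel, norm_exp]
  congr 1
  simp [mul_re, mul_im, pow_succ]
  ring

lemma airyKernel_ofReal_mul_I (x u : ℝ) :
    airyKernel x (u * I) = (Real.exp (u ^ 3 / 3 - x * u) : ℂ) := by
  rw [airyKernel, ofReal_exp]
  congr 1
  push_cast
  ring_nf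
  simp only [I_sq, I_pow_four]
  ring

lemma hasDerivAt_airyKernel (x : ℝ) (z : ℂ) :
    HasDerivAt (airyKernel x) (I * (z ^ 2 + x) * airyKernel x z) z := by
  have h : HasDerivAt (fun z : ℂ => I * (z ^ 3 / 3 + x * z)) (I * (z ^ 2 + x)) z :=
    ((((hasDerivAt_pow 3 z).div_const 3).add
      ((hasDerivAt_id z).const_mul (x : ℂ))).const_mul I).congr_deriv (by push_cast; ring)
  exact h.cexp.congr_deriv (by rw [airyKernel]; ring)

lemma hasDerivAt_airyKernel_param (x : ℝ) (z : ℂ) :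
    HasDerivAt (fun x : ℝ => airyKernel x z) (I * z * airyKernel x z) x := by
  have h : HasDerivAt (fun w : ℂ => I * (z ^ 3 / 3 + w * z)) (I * z) x :=
    ((((hasDerivAt_id (x : ℂ)).mul_const z).const_add (z ^ 3 / 3)).const_mul I).congr_deriv
      (by ring)
  exact (h.cexp.congr_deriv (by rw [airyKernel]; ring)).comp_ofReal

-- Each derivative in `x` brings down a factor `iz`.
noncomputable def airyIntegrand (k : ℕ) (x s : ℝ) : ℂ := (I * (s + I)) ^ k * airyKernel x (s + I)

noncomputable def airyMoment (k : ℕ) (x : ℝ) : ℂ := ∫ s in Ioi (0 : ℝ), airyIntegrand k x s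

lemma continuous_airyIntegrand (k : ℕ) (x : ℝ) : Continuous (airyIntegrand k x) := by
  unfold airyIntegrand
  fun_prop

lemma integrableOn_add_one_pow_mul_exp_neg_sq (n : ℕ) :
    IntegrableOn (fun s : ℝ => (s + 1) ^ n * Real.exp (-s ^ 2)) (Ioi 0) := by
  have hpow (k : ℕ) : IntegrableOn (fun s : ℝ => s ^ k * Real.exp (-s ^ 2)) (Ioi 0) := by
    refine (integrableOn_rpow_mul_exp_neg_mul_sq one_pos
      (by linarith [(k.cast_nonneg : (0 : ℝ) ≤ k)])).congr_fun (fun s _ => ?_) measurableSet_Ioi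
    simp
  simp_rw [add_pow, one_pow, mul_one, Finset.sum_mul]
  refine integrable_finsetSum _ fun k _ => ?_
  exact ((hpow k).const_mul (n.choose k : ℝ)).congr (ae_of_all _ fun s => by ring)

lemma norm_airyKernel_add_I (x s : ℝ) :
    ‖airyKernel x (s + I)‖ = Real.exp (1 / 3 - x) * Real.exp (-s ^ 2) := by
  simpa [← Real.exp_add, sub_eq_add_neg, add_comm, add_left_comm] using norm_airyKernel x s 1

lemma norm_airyIntegrand_le (k : ℕ) (x : ℝ) {s : ℝ} (hs : 0 ≤ s) :
    ‖airyIntegrand k x s‖ ≤ Real.exp (1 / 3 - x) * ((s + 1) ^ k * Real.exp (-s ^ 2)) := by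
  have hpoint : ‖I * (s + I)‖ ≤ s + 1 := by
    simpa [abs_of_nonneg hs] using norm_add_le (s : ℂ) I
  rw [airyIntegrand, norm_mul, norm_pow, norm_airyKernel_add_I]
  calc ‖I * (s + I)‖ ^ k * (Real.exp (1 / 3 - x) * Real.exp (-s ^ 2))
      ≤ (s + 1) ^ k * (Real.exp (1 / 3 - x) * Real.exp (-s ^ 2)) := by gcongr
    _ = _ := by ring

lemma integrableOn_airyIntegrand (k : ℕ) (x : ℝ) : IntegrableOn (airyIntegrand k x) (Ioi 0) :=
  ((integrableOn_add_one_pow_mul_exp_neg_sq k).const_mul _).mono'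
    (continuous_airyIntegrand k x).aestronglyMeasurable
    ((ae_restrict_mem measurableSet_Ioi).mono fun _ hs => norm_airyIntegrand_le k x (le_of_lt hs))

lemma hasDerivAt_airyMoment (k : ℕ) (x₀ : ℝ) :
    HasDerivAt (airyMoment k) (airyMoment (k + 1) x₀) x₀ := by
  have hbound : ∀ᵐ s ∂volume.restrict (Ioi 0), ∀ x ∈ Metric.ball x₀ 1,
      ‖airyIntegrand (k + 1) x s‖ ≤
        Real.exp (4 / 3 - x₀) * ((s + 1) ^ (k + 1) * Real.exp (-s ^ 2)) := by
    filter_upwards [ae_restrict_mem measurableSet_Ioi] with s (hs : 0 < s) x hx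
    refine (norm_airyIntegrand_le _ x hs.le).trans ?_
    rw [Metric.mem_ball, Real.dist_eq] at hx
    refine mul_le_mul_of_nonneg_right (Real.exp_le_exp.mpr ?_) (by positivity)
    linarith [(abs_lt.mp hx).1]
  have hderiv : ∀ x s, HasDerivAt (fun x => airyIntegrand k x s) (airyIntegrand (k + 1) x s) x :=
    fun x s => ((hasDerivAt_airyKernel_param x _).const_mul _).congr_deriv
      (by rw [airyIntegrand]; ring)
  exact (hasDerivAt_integral_of_dominated_loc_of_deriv_le (Metric.ball_mem_nhds x₀ one_pos)
    (.of_forall fun x => (continuous_airyIntegrand k x).aestronglyMeasurable)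
    (integrableOn_airyIntegrand k x₀)
    (continuous_airyIntegrand (k + 1) x₀).aestronglyMeasurable hbound
    ((integrableOn_add_one_pow_mul_exp_neg_sq (k + 1)).const_mul _)
    (ae_of_all _ fun s x _ => hderiv x s)).2

lemma tendsto_airyMoment_atTop (k : ℕ) : Tendsto (airyMoment k) atTop (𝓝 0) := by
  set K := ∫ s in Ioi (0 : ℝ), (s + 1) ^ k * Real.exp (-s ^ 2)
  have hbound (x : ℝ) : ‖airyMoment k x‖ ≤ Real.exp (1 / 3 - x) * K := by
    rw [← integral_const_mul]
    exact norm_integral_le_of_norm_le ((integrableOn_add_one_pow_mul_exp_neg_sq k).const_mul _)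
      ((ae_restrict_mem measurableSet_Ioi).mono fun _ hs =>
        norm_airyIntegrand_le k x (le_of_lt hs))
  refine squeeze_zero_norm hbound ?_
  have hexp : Tendsto (fun x : ℝ => Real.exp (1 / 3 - x)) atTop (𝓝 0) :=
    Real.tendsto_exp_atBot.comp (tendsto_atBot_add_const_left _ _ tendsto_neg_atTop_atBot)
  simpa using hexp.mul_const K

lemma airyMoment_two (x : ℝ) : airyMoment 2 x = x * airyMoment 0 x - I * airyKernel x I := by
  have hderiv (s : ℝ) : HasDerivAt (fun s : ℝ => airyKernel x (s + I))
      (-I * (airyIntegrand 2 x s - x * airyIntegrand 0 x s)) s := by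
    have h := ((hasDerivAt_airyKernel x (s + I)).comp (s : ℂ)
      ((hasDerivAt_id (s : ℂ)).add_const I)).comp_ofReal
    refine h.congr_deriv ?_
    simp only [airyIntegrand]
    linear_combination I * (s + I : ℂ) ^ 2 * airyKernel x (s + I) * I_sq
  have hint : IntegrableOn (fun s => -I * (airyIntegrand 2 x s - x * airyIntegrand 0 x s))
      (Ioi 0) :=
    ((integrableOn_airyIntegrand 2 x).sub
      ((integrableOn_airyIntegrand 0 x).const_mul _)).const_mul _
  have hlim : Tendsto (fun s : ℝ => airyKernel x (s + I)) atTop (𝓝 0) := by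
    refine squeeze_zero_norm (fun s => (norm_airyKernel_add_I x s).le) ?_
    simpa using (Real.tendsto_exp_atBot.comp (tendsto_neg_atTop_atBot.comp
      (tendsto_pow_atTop two_ne_zero))).const_mul (Real.exp (1 / 3 - x))
  have h := integral_Ioi_of_hasDerivAt_of_tendsto' (fun s _ => hderiv s) hint hlim
  rw [integral_const_mul, integral_sub (integrableOn_airyIntegrand 2 x)
    ((integrableOn_airyIntegrand 0 x).const_mul _), integral_const_mul] at h
  change -I * (airyMoment 2 x - x * airyMoment 0 x) = 0 - airyKernel x (0 + I) at h
  rw [zero_add] at h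
  linear_combination I * h + (airyMoment 2 x - x * airyMoment 0 x) * I_sq

lemma tendsto_integral_airyKernel_right_edge (x : ℝ) :
    Tendsto (fun R : ℝ => ∫ u in (0 : ℝ)..1, airyKernel x (R + u * I)) atTop (𝓝 0) := by
  have hlim : ∀ u ∈ uIoc (0 : ℝ) 1,
      Tendsto (fun R : ℝ => airyKernel x (R + u * I)) atTop (𝓝 0) := by
    intro u hu
    rw [uIoc_of_le zero_le_one] at hu
    have hexponent : Tendsto (fun R : ℝ => u ^ 3 / 3 + -(R ^ 2 * u) + -(x * u)) atTop atBot :=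
      tendsto_atBot_add_const_right _ _ <| tendsto_atBot_add_const_left _ _ <|
        tendsto_neg_atTop_atBot.comp <| (tendsto_pow_atTop two_ne_zero).atTop_mul_const hu.1
    exact squeeze_zero_norm (fun R => (norm_airyKernel x R u).le)
      (Real.tendsto_exp_atBot.comp (hexponent.congr fun R => by ring))
  have hbound : ∀ R : ℝ, ∀ u ∈ uIoc (0 : ℝ) 1,
      ‖airyKernel x (R + u * I)‖ ≤ Real.exp (1 / 3 + |x|) := by
    intro R u hu
    rw [uIoc_of_le zero_le_one] at hu
    rw [norm_airyKernel, Real.exp_le_exp]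
    have hu3 : u ^ 3 ≤ 1 := pow_le_one₀ hu.1.le hu.2
    nlinarith [neg_abs_le x, abs_nonneg x, sq_nonneg R, hu.1, hu.2]
  simpa using intervalIntegral.tendsto_integral_filter_of_dominated_convergence _
    (.of_forall fun R : ℝ => (by fun_prop : Continuous fun u : ℝ => airyKernel x (R + u * I))
      |>.aestronglyMeasurable)
    (.of_forall fun R => ae_of_all _ (hbound R)) intervalIntegrable_const (ae_of_all _ hlim)

lemma tendsto_re_integral_airyKernel (x : ℝ) :
    Tendsto (fun R : ℝ => (∫ t in (0 : ℝ)..R, airyKernel x t).re) atTop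
      (𝓝 (airyMoment 0 x).re) := by
  have hrect (R : ℝ) := integral_boundary_rect_eq_zero_of_differentiableOn (airyKernel x) 0 (R + I)
    fun z _ => (hasDerivAt_airyKernel x z).differentiableAt.differentiableWithinAt
  simp only [zero_re, zero_im, add_re, add_im, ofReal_re, ofReal_im, I_re, I_im, add_zero,
    zero_add, ofReal_zero, ofReal_one, zero_mul, one_mul] at hrect
  -- The kernel is real on the imaginary axis, so the left edge does not affect the real part.
  have hvert : (I • ∫ u in (0 : ℝ)..1, airyKernel x (u * I)).re = 0 := by
    simp only [airyKernel_ofReal_mul_I, intervalIntegral.integral_ofReal, smul_eq_mul, mul_re,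
      I_re, I_im, ofReal_re, ofReal_im]
    ring
  have hre (R : ℝ) : (∫ t in (0 : ℝ)..R, airyKernel x t).re =
      (∫ t in (0 : ℝ)..R, airyIntegrand 0 x t).re -
        (I • ∫ u in (0 : ℝ)..1, airyKernel x (R + u * I)).re := by
    have h := congrArg re (hrect R)
    simp only [sub_re, add_re, zero_re, hvert] at h
    simp only [airyIntegrand, pow_zero, one_mul]
    linarith
  have hhoriz := intervalIntegral_tendsto_integral_Ioi 0 (integrableOn_airyIntegrand 0 x) tendsto_id
  have hright := (tendsto_integral_airyKernel_right_edge x).const_smul I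
  simpa [hre, airyMoment] using
    ((continuous_re.tendsto _).comp hhoriz).sub ((continuous_re.tendsto _).comp hright)

lemma Ai_eq_re_airyMoment (x : ℝ) : Ai x = (airyMoment 0 x).re / Real.pi := by
  have hcos (R : ℝ) : ∫ t in (0 : ℝ)..R, Real.cos (t ^ 3 / 3 + x * t) =
      (∫ t in (0 : ℝ)..R, airyKernel x t).re := by
    rw [← reCLM_apply, ← reCLM.intervalIntegral_comp_comm
      ((by fun_prop : Continuous fun t : ℝ => airyKernel x t).intervalIntegrable _ _)]
    congr with t
    rw [reCLM_apply, airyKernel, ← exp_ofReal_mul_I_re]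
    push_cast
    ring_nf
  rw [Ai, ((tendsto_re_integral_airyKernel x).congr fun R => (hcos R).symm).limUnder_eq]
  ring

lemma hasDerivAt_re_airyMoment (k : ℕ) (x : ℝ) :
    HasDerivAt (fun y => (airyMoment k y).re) (airyMoment (k + 1) x).re x :=
  reCLM.hasFDerivAt.comp_hasDerivAt x (hasDerivAt_airyMoment k x)

lemma hasDerivAt_Ai (x : ℝ) : HasDerivAt Ai ((airyMoment 1 x).re / Real.pi) x := by
  rw [funext Ai_eq_re_airyMoment]
  exact (hasDerivAt_re_airyMoment 0 x).div_const _

lemma hasDerivAt_deriv_Ai (x : ℝ) : HasDerivAt (deriv Ai) (x * Ai x) x := by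
  have hkernel : airyKernel x I = (Real.exp (1 / 3 - x) : ℂ) := by
    simpa using airyKernel_ofReal_mul_I x 1
  rw [funext fun x => (hasDerivAt_Ai x).deriv, Ai_eq_re_airyMoment]
  -- The boundary term `-i e^{1/3 - x}` of `airyMoment_two` is purely imaginary.
  refine ((hasDerivAt_re_airyMoment 1 x).div_const Real.pi).congr_deriv ?_
  change (airyMoment 2 x).re / Real.pi = _
  simp only [airyMoment_two, hkernel, sub_re, mul_re, I_re, I_im, ofReal_re, ofReal_im]
  ring

lemma tendsto_Ai_atTop : Tendsto Ai atTop (𝓝 0) := by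
  simpa [funext Ai_eq_re_airyMoment] using
    ((continuous_re.tendsto 0).comp (tendsto_airyMoment_atTop 0)).div_const Real.pi

lemma tendsto_deriv_Ai_atTop : Tendsto (deriv Ai) atTop (𝓝 0) := by
  simpa [funext fun x => (hasDerivAt_Ai x).deriv] using
    ((continuous_re.tendsto 0).comp (tendsto_airyMoment_atTop 1)).div_const Real.pi

namespace AiryODE

variable {f f' : ℝ → ℝ}

theorem antitone_energy (hf : ∀ x, HasDerivAt f (f' x) x)
    (hf' : ∀ x, HasDerivAt f' (x * f x) x) : Antitone fun t => f' t ^ 2 - t * f t ^ 2 := by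
  refine antitone_of_hasDerivAt_nonpos (f' := fun t => -f t ^ 2) (fun t => ?_)
    fun t => neg_nonpos.mpr (sq_nonneg _)
  exact (((hf' t).fun_pow 2).sub ((hasDerivAt_id' t).mul ((hf t).fun_pow 2))).congr_deriv
    (by push_cast; ring)

theorem mul_deriv_nonpos (hf : ∀ x, HasDerivAt f (f' x) x)
    (hf' : ∀ x, HasDerivAt f' (x * f x) x) (hlim : Tendsto (fun t => f t * f' t) atTop (𝓝 0))
    {t : ℝ} (ht : 0 ≤ t) : f t * f' t ≤ 0 := by
  have hmono : MonotoneOn (fun t => f t * f' t) (Ici 0) := by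
    refine monotoneOn_of_hasDerivWithinAt_nonneg (f' := fun t => f' t ^ 2 + t * f t ^ 2)
      (convex_Ici 0) (fun t _ => ((hf t).mul (hf' t)).continuousAt.continuousWithinAt)
      (fun t _ => ((hf t).mul (hf' t)).hasDerivWithinAt.congr_deriv (by ring)) fun t ht => ?_
    rw [interior_Ici] at ht
    have ht0 : 0 ≤ t := (mem_Ioi.mp ht).le
    positivity
  exact ge_of_tendsto hlim (eventually_ge_atTop t |>.mono fun s hs => hmono ht (ht.trans hs) hs)

theorem antitoneOn_sq (hf : ∀ x, HasDerivAt f (f' x) x)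
    (hf' : ∀ x, HasDerivAt f' (x * f x) x) (hlim : Tendsto (fun t => f t * f' t) atTop (𝓝 0)) :
    AntitoneOn (fun t => f t ^ 2) (Ici 0) := by
  refine antitoneOn_of_hasDerivWithinAt_nonpos (f' := fun t => 2 * (f t * f' t))
    (convex_Ici 0) (fun t _ => ((hf t).pow 2).continuousAt.continuousWithinAt)
    (fun t _ => ((hf t).pow 2).hasDerivWithinAt.congr_deriv
      (by push_cast; ring)) fun t ht => ?_
  rw [interior_Ici] at ht
  linarith [mul_deriv_nonpos hf hf' hlim (mem_Ioi.mp ht).le]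

theorem abs_deriv_le_of_eq_zero (hf : ∀ x, HasDerivAt f (f' x) x)
    (hf' : ∀ x, HasDerivAt f' (x * f x) x) {a s : ℝ} (ha : f a = 0) (has : a ≤ s) (hs : s ≤ 0) :
    |f' s| ≤ |f' a| := by
  have h := antitone_energy hf hf' has
  simp only [ha] at h
  exact sq_le_sq.mp (by nlinarith [sq_nonneg (f s)])

theorem abs_le_of_eq_zero_of_nonpos (hf : ∀ x, HasDerivAt f (f' x) x)
    (hf' : ∀ x, HasDerivAt f' (x * f x) x) {a c : ℝ} (ha : f a = 0) (hac : a ≤ c) (hc : c ≤ 0) :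
    |f c| ≤ |f' a| * (c - a) := by
  simpa [ha] using norm_image_sub_le_of_norm_deriv_le_segment' (fun x _ => (hf x).hasDerivWithinAt)
    (fun s hs => abs_deriv_le_of_eq_zero hf hf' ha hs.1 (hs.2.le.trans hc)) c ⟨hac, le_rfl⟩

theorem abs_le_of_eq_zero (hf : ∀ x, HasDerivAt f (f' x) x)
    (hf' : ∀ x, HasDerivAt f' (x * f x) x) (hlim : Tendsto (fun t => f t * f' t) atTop (𝓝 0))
    {a c : ℝ} (ha : f a = 0) (hac : a ≤ c) : |f c| ≤ |f' a| * (c - a) := by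
  rcases le_total c 0 with hc | hc
  · exact abs_le_of_eq_zero_of_nonpos hf hf' ha hac hc
  have habs {s : ℝ} (hs : 0 ≤ s) (hsc : s ≤ c) : |f c| ≤ |f s| :=
    sq_le_sq.mp (antitoneOn_sq hf hf' hlim hs (hs.trans hsc) hsc)
  rcases le_total a 0 with ha0 | ha0
  · calc |f c| ≤ |f 0| := habs le_rfl hc
      _ ≤ |f' a| * (0 - a) := abs_le_of_eq_zero_of_nonpos hf hf' ha ha0 le_rfl
      _ ≤ |f' a| * (c - a) := by gcongr
  · calc |f c| ≤ |f a| := habs ha0 hac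
      _ = 0 := by rw [ha, abs_zero]
      _ ≤ |f' a| * (c - a) := mul_nonneg (abs_nonneg _) (sub_nonneg.mpr hac)

end AiryODE

theorem airy_translate_linear_bound_general (a : ℝ) (hzero : Ai a = 0) :
    ∀ x : ℝ, 0 ≤ x → |Ai (x + a)| ≤ x * |deriv Ai a| := by
  intro x hx
  have h := AiryODE.abs_le_of_eq_zero (fun t => (hasDerivAt_Ai t).differentiableAt.hasDerivAt)
    hasDerivAt_deriv_Ai (by simpa using tendsto_Ai_atTop.mul tendsto_deriv_Ai_atTop) hzero
    (le_add_of_nonneg_left hx)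
  rwa [add_sub_cancel_right, mul_comm] at h

/-- For every zero `a < 0` of `Ai` and every `x ≥ 0`, one has `|Ai(x + a)| ≤ x·|Ai'(a)|`. -/
theorem airy_translate_linear_bound (a : ℝ) (ha : a < 0) (hzero : Ai a = 0) :
    ∀ x : ℝ, 0 ≤ x → |Ai (x + a)| ≤ x * |deriv Ai a| :=
  airy_translate_linear_bound_general a hzero
end

section
/- Let T > 0, let σ ∈ C²([0,1]) be positive, let Q ∈ C¹([0,T]) be positive, set J(t) = ∫₀^t σ(s)²/2 ds for t ∈ [0,1], and let q : [0, J(1)] → (0,∞) be defined by q(J(s)) = 2·Q(s·T)/σ(s)² for s ∈ [0,1]. If w : [0,J(1)] × [0,∞) → ℝ is a classical solution of ∂_τ w(τ,ξ) = T^{1/3}·(∂_ξ² w(τ,ξ) − q(τ)·ξ·w(τ,ξ)), then the function u : [0,T] × [0,∞) → ℝ defined by u(t,x) = w( J(t/T), T^{-1/3}·x ) · exp( T^{1/3}·α₁·∫₀^{J(t/T)} q(s)^{2/3} ds ) is a classical solution of ∂_t u(t,x) = (σ(t/T)²/2)·∂_x² u(t,x) + ( −T^{-1}·Q(t)·x +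 T^{-2/3}·α₁·Q(t)^{2/3}·(σ(t/T)²/2)^{1/3} )·u(t,x). Moreover, if w satisfies the Dirichlet boundary condition w(τ,0) = 0 for all τ, then so does u. -/
/-!
The substitution is a composition of three elementary changes of variables. The time change
`τ = J(t/T)` gives `∂ₜ = (σ(t/T)²/(2T)) ∂_τ`, and the rescaling `ξ = T^{-1/3} x` gives
`∂_ξ² = T^{2/3} ∂ₓ²`, so the powers of `T` in front of the diffusion term cancel. The
exponential factor has `τ`-derivative `T^{1/3} α₁ q(τ)^{2/3}` times itself, which produces the
zeroth-order term once `q(τ) · σ(t/T)²/2 = Q(t)` is used. For that factor to be differentiable,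
`q` must be continuous on `[0, J(1)]`: `q ∘ J` is continuous, and a continuous map out of a
compact interval is a quotient map onto its image.
-/

open MeasureTheory Filter Set

section Primitive

variable {f : ℝ → ℝ} {a b : ℝ}

theorem hasDerivAt_primitive_of_continuousOn (hf : ContinuousOn f (Icc a b)) {x : ℝ}
    (hx : x ∈ Ioo a b) : HasDerivAt (fun y => ∫ s in a..y, f s) (f x) x :=
  intervalIntegral.integral_hasDerivAt_right
    (hf.mono (uIcc_subset_Icc (left_mem_Icc.2 (hx.1.trans hx.2).le)
      (Ioo_subset_Icc_self hx))).intervalIntegrable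
    (hf.mono Ioo_subset_Icc_self |>.stronglyMeasurableAtFilter isOpen_Ioo x hx)
    (hf.continuousAt (Icc_mem_nhds hx.1 hx.2))

theorem continuousOn_primitive_of_continuousOn (hf : ContinuousOn f (Icc a b)) :
    ContinuousOn (fun y => ∫ s in a..y, f s) (Icc a b) := by
  rcases le_or_gt a b with hab | hba
  · have := intervalIntegral.continuousOn_primitive_interval (a := a) (b := b)
      (by rw [uIcc_of_le hab]; exact hf.integrableOn_Icc (μ := volume))
    rwa [uIcc_of_le hab] at this
  · simp [Icc_eq_empty_of_lt hba]

theorem strictMonoOn_primitive_of_pos (hf : ContinuousOn f (Icc a b))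
    (hpos : ∀ x ∈ Icc a b, 0 < f x) : StrictMonoOn (fun y => ∫ s in a..y, f s) (Icc a b) := by
  refine strictMonoOn_of_deriv_pos (convex_Icc a b) (continuousOn_primitive_of_continuousOn hf)
    fun x hx => ?_
  rw [interior_Icc] at hx
  rw [(hasDerivAt_primitive_of_continuousOn hf hx).deriv]
  exact hpos x (Ioo_subset_Icc_self hx)

theorem image_primitive_Icc_of_pos (hab : a ≤ b) (hf : ContinuousOn f (Icc a b))
    (hpos : ∀ x ∈ Icc a b, 0 < f x) :
    (fun y => ∫ s in a..y, f s) '' Icc a b = Icc 0 (∫ s in a..b, f s) := by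
  have hmono := (strictMonoOn_primitive_of_pos hf hpos).monotoneOn
  refine (image_subset_iff.2 fun x hx => ?_).antisymm ?_
  · simpa using hmono.mapsTo_Icc hx
  · simpa using intermediate_value_Icc hab (continuousOn_primitive_of_continuousOn hf)

end Primitive

theorem IsCompact.continuousOn_image_of_comp {X Y Z : Type*} [TopologicalSpace X]
    [TopologicalSpace Y] [T2Space Y] [TopologicalSpace Z] {K : Set X} (hK : IsCompact K)
    {f : X → Y} {g : Y → Z} (hf : ContinuousOn f K) (hgf : ContinuousOn (g ∘ f) K) :
    ContinuousOn g (f '' K) := by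
  have : CompactSpace K := isCompact_iff_compactSpace.1 hK
  let f' : K → f '' K := fun x => ⟨f x, mem_image_of_mem f x.2⟩
  have hf' : Continuous f' := hf.domRestrict.subtype_mk _
  have hquot : Topology.IsQuotientMap f' :=
    hf'.isClosedMap.isQuotientMap hf' fun ⟨_, x, hx, rfl⟩ => ⟨⟨x, hx⟩, rfl⟩
  rw [continuousOn_iff_continuous_domRestrict, hquot.continuous_iff]
  exact hgf.domRestrict

theorem deriv_deriv_comp_mul_left_mul_const (g : ℝ → ℝ) (c E x : ℝ) :
    deriv (deriv fun y => g (c * y) * E) x = c ^ 2 * deriv (deriv g) (c * x) * E := by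
  have h1 : deriv (fun y => g (c * y) * E) = fun y => c * deriv g (c * y) * E := by
    ext y; simp only [deriv_mul_const_field', deriv_comp_mul_left c g y, smul_eq_mul]
  simp only [h1, deriv_mul_const_field', deriv_const_mul_field', deriv_comp_mul_left c (deriv g) x,
    smul_eq_mul]
  ring

theorem div_rpow_mul_self {a b : ℝ} (ha : 0 < a) (hb : 0 ≤ b) (p : ℝ) :
    (b / a) ^ p * a = b ^ p * a ^ (1 - p) := by
  rw [Real.div_rpow hb ha.le, Real.rpow_sub ha, Real.rpow_one]
  field_simp

theorem continuousOn_of_comp_eq_mul_div_sq {J q σ Q : ℝ → ℝ} {T : ℝ} (hT : 0 ≤ T)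
    (hJ : ContinuousOn J (Icc 0 1)) (hσ : ContinuousOn σ (Icc 0 1))
    (hσ0 : ∀ s ∈ Icc (0:ℝ) 1, σ s ≠ 0) (hQ : ContinuousOn Q (Icc 0 T))
    (hqJ : ∀ s ∈ Icc (0:ℝ) 1, q (J s) = 2 * Q (s * T) / σ s ^ 2) :
    ContinuousOn q (J '' Icc 0 1) := by
  refine isCompact_Icc.continuousOn_image_of_comp hJ ?_
  have hQT : ContinuousOn (fun s => Q (s * T)) (Icc 0 1) :=
    hQ.comp (by fun_prop) fun s hs => ⟨mul_nonneg hs.1 hT, mul_le_of_le_one_left hT hs.2⟩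
  exact ((continuousOn_const.mul hQT).div (hσ.pow 2)
    fun s hs => pow_ne_zero 2 (hσ0 s hs)).congr hqJ

theorem ContinuousOn.comp_mul_exp_comp {w : ℝ → ℝ → ℝ} {m G : ℝ → ℝ} {s s' : Set ℝ} {c : ℝ}
    (hw : ContinuousOn (fun p : ℝ × ℝ => w p.1 p.2) (s ×ˢ Ici 0)) (hm : ContinuousOn m s')
    (hms : MapsTo m s' s) (hG : ContinuousOn G s) (hc : 0 ≤ c) :
    ContinuousOn (fun p : ℝ × ℝ => w (m p.1) (c * p.2) * Real.exp (G (m p.1))) (s' ×ˢ Ici 0) := by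
  have hm' : ContinuousOn (fun p : ℝ × ℝ => m p.1) (s' ×ˢ Ici 0) :=
    hm.comp continuousOn_fst fun p hp => hp.1
  refine ContinuousOn.mul ?_ (Real.continuous_exp.comp_continuousOn
    (hG.comp hm' fun p hp => hms hp.1))
  exact hw.comp (hm'.prodMk (by fun_prop)) fun p hp => ⟨hms hp.1, mul_nonneg hc hp.2⟩

theorem airy_coefficient_identity {T A Q q : ℝ} (hT : 0 < T) (hA : 0 < A) (hQ : 0 ≤ Q)
    (hq : q * A = Q) (α x W D : ℝ) :
    (T ^ ((1:ℝ)/3) * (D - q * (T ^ (-(1:ℝ)/3) * x) * W)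
        + W * (T ^ ((1:ℝ)/3) * α * q ^ ((2:ℝ)/3))) * (A * (1 / T))
      = A * ((T ^ (-(1:ℝ)/3)) ^ 2 * D)
        + (-(T⁻¹ * Q * x) + T ^ (-(2:ℝ)/3) * α * Q ^ ((2:ℝ)/3) * A ^ ((1:ℝ)/3)) * W := by
  have hq' : q ^ ((2:ℝ)/3) * A = Q ^ ((2:ℝ)/3) * A ^ ((1:ℝ)/3) := by
    have hqQ : q = Q / A := by rw [← hq, mul_div_cancel_right₀ q hA.ne']
    rw [hqQ, div_rpow_mul_self hA hQ]
    norm_num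
  set P := T ^ ((1:ℝ)/3) with hP
  have hP0 : P ≠ 0 := (Real.rpow_pos_of_pos hT _).ne'
  have hTP : T = P ^ 3 := by
    rw [hP, ← Real.rpow_natCast, ← Real.rpow_mul hT.le]; norm_num
  have hP1 : T ^ (-(1:ℝ)/3) = P⁻¹ := by
    rw [hP, ← Real.rpow_neg hT.le]; norm_num
  have hP2 : T ^ (-(2:ℝ)/3) = (P ^ 2)⁻¹ := by
    rw [hP, ← Real.rpow_natCast, ← Real.rpow_mul hT.le, ← Real.rpow_neg hT.le]; norm_num
  rw [hP1, hP2, hTP]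
  field_simp
  linear_combination (-(x * W)) * hq + (P * W * α) * hq'

theorem airySubstitution_contDiffAt_and_hasDerivAt {T α A Qt t x : ℝ} {J q F : ℝ → ℝ}
    {w u : ℝ → ℝ → ℝ} (hT : 0 < T) (hA : 0 < A) (hQt : 0 ≤ Qt)
    (hJ : HasDerivAt J A (t / T)) (hq : q (J (t / T)) * A = Qt)
    (hF : HasDerivAt F (q (J (t / T)) ^ ((2:ℝ)/3)) (J (t / T)))
    (hw_space : ContDiffAt ℝ 2 (w (J (t / T))) (T ^ (-(1:ℝ)/3) * x))
    (hw_pde : HasDerivAt (fun s => w s (T ^ (-(1:ℝ)/3) * x))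
      (T ^ ((1:ℝ)/3) * (deriv (deriv (w (J (t / T)))) (T ^ (-(1:ℝ)/3) * x)
        - q (J (t / T)) * (T ^ (-(1:ℝ)/3) * x) * w (J (t / T)) (T ^ (-(1:ℝ)/3) * x))) (J (t / T)))
    (hu : ∀ t x, u t x =
      w (J (t / T)) (T ^ (-(1:ℝ)/3) * x) * Real.exp (T ^ ((1:ℝ)/3) * α * F (J (t / T)))) :
    ContDiffAt ℝ 2 (u t) x ∧
    HasDerivAt (fun s => u s x)
      (A * deriv (deriv (u t)) x
        + (-(T⁻¹ * Qt * x) + T ^ (-(2:ℝ)/3) * α * Qt ^ ((2:ℝ)/3) * A ^ ((1:ℝ)/3)) * u t x) t := by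
  have hut : u t = fun y => w (J (t / T)) (T ^ (-(1:ℝ)/3) * y) *
      Real.exp (T ^ ((1:ℝ)/3) * α * F (J (t / T))) := funext (hu t)
  refine ⟨hut ▸ (hw_space.comp x (contDiffAt_const.mul contDiffAt_id)).mul contDiffAt_const, ?_⟩
  have htime := (hw_pde.mul ((hF.const_mul (T ^ ((1:ℝ)/3) * α)).exp)).comp (h := (J <| · / T)) t
    (hJ.comp t ((hasDerivAt_id' t).div_const T))
  refine (htime.congr_of_eventuallyEq (.of_eq (funext fun s => hu s x))).congr_deriv ?_
  simp only [hut, deriv_deriv_comp_mul_left_mul_const]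
  linear_combination Real.exp (T ^ ((1:ℝ)/3) * α * F (J (t / T))) *
    airy_coefficient_identity hT hA hQt hq α x (w (J (t / T)) (T ^ (-(1:ℝ)/3) * x))
      (deriv (deriv (w (J (t / T)))) (T ^ (-(1:ℝ)/3) * x))

theorem airy_pde_change_of_variables_general
    (α₁ : ℝ)
    (T : ℝ) (hT : 0 < T)
    (σ : ℝ → ℝ) (hσ : ContDiffOn ℝ 2 σ (Set.Icc 0 1))
    (hσpos : ∀ s ∈ Set.Icc (0:ℝ) 1, 0 < σ s)
    (Q : ℝ → ℝ) (hQ : ContDiffOn ℝ 1 Q (Set.Icc 0 T))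
    (hQpos : ∀ t ∈ Set.Icc (0:ℝ) T, 0 < Q t)
    (J : ℝ → ℝ) (hJ : ∀ t : ℝ, J t = ∫ s in (0:ℝ)..t, σ s ^ 2 / 2)
    (q : ℝ → ℝ) (hqdef : ∀ s ∈ Set.Icc (0:ℝ) 1, q (J s) = 2 * Q (s * T) / σ s ^ 2)
    (w : ℝ → ℝ → ℝ)
    -- `w` is a classical solution of `∂_τ w = T^{1/3}(∂_ξ² w − q(τ)·ξ·w)`:
    (hw_cont : ContinuousOn (fun p : ℝ × ℝ => w p.1 p.2) (Set.Icc 0 (J 1) ×ˢ Set.Ici 0))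
    (hw_space : ∀ τ ∈ Set.Ioo (0:ℝ) (J 1), ∀ ξ ∈ Set.Ioi (0:ℝ), ContDiffAt ℝ 2 (w τ) ξ)
    (hw_pde : ∀ τ ∈ Set.Ioo (0:ℝ) (J 1), ∀ ξ ∈ Set.Ioi (0:ℝ),
      HasDerivAt (fun s => w s ξ)
        (T ^ ((1:ℝ)/3) * (deriv (deriv (w τ)) ξ - q τ * ξ * w τ ξ)) τ)
    (u : ℝ → ℝ → ℝ)
    (hu : ∀ t x : ℝ, u t x =
      w (J (t / T)) (T ^ (-(1:ℝ)/3) * x) *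
        Real.exp (T ^ ((1:ℝ)/3) * α₁ * ∫ s in (0:ℝ)..(J (t / T)), q s ^ ((2:ℝ)/3))) :
    -- `u` is a classical solution of the transformed PDE:
    ContinuousOn (fun p : ℝ × ℝ => u p.1 p.2) (Set.Icc 0 T ×ˢ Set.Ici 0) ∧
    (∀ t ∈ Set.Ioo (0:ℝ) T, ∀ x ∈ Set.Ioi (0:ℝ),
      ContDiffAt ℝ 2 (u t) x ∧
      HasDerivAt (fun s => u s x)
        (σ (t / T) ^ 2 / 2 * deriv (deriv (u t)) x
          + (-(T⁻¹ * Q t * x)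
              + T ^ (-(2:ℝ)/3) * α₁ * Q t ^ ((2:ℝ)/3) * (σ (t / T) ^ 2 / 2) ^ ((1:ℝ)/3))
            * u t x) t) ∧
    ((∀ τ : ℝ, w τ 0 = 0) → ∀ t : ℝ, u t 0 = 0) := by
  have hσ2 : ContinuousOn (fun s => σ s ^ 2 / 2) (Icc 0 1) := (hσ.continuousOn.pow 2).div_const 2
  have hσ2pos : ∀ s ∈ Icc (0:ℝ) 1, 0 < σ s ^ 2 / 2 := fun s hs => by
    have := hσpos s hs; positivity
  have hJ_eq : (fun t => ∫ s in (0:ℝ)..t, σ s ^ 2 / 2) = J := (funext hJ).symm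
  have hJ_cont : ContinuousOn J (Icc 0 1) := hJ_eq ▸ continuousOn_primitive_of_continuousOn hσ2
  have hJ_image : J '' Icc 0 1 = Icc 0 (J 1) := by
    rw [← hJ_eq, image_primitive_Icc_of_pos zero_le_one hσ2 hσ2pos]
  have hJ_Ioo : MapsTo J (Ioo 0 1) (Ioo 0 (J 1)) := by
    have := (hJ_eq ▸ strictMonoOn_primitive_of_pos hσ2 hσ2pos).mapsTo_Ioo
    rwa [hJ 0, intervalIntegral.integral_same] at this
  have hq23 : ContinuousOn (fun y => q y ^ ((2:ℝ)/3)) (Icc 0 (J 1)) :=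
    (hJ_image ▸ continuousOn_of_comp_eq_mul_div_sq hT.le hJ_cont hσ.continuousOn
      (fun s hs => (hσpos s hs).ne') hQ.continuousOn hqdef).rpow_const
      fun _ _ => Or.inr (by norm_num)
  have hdivT : MapsTo (· / T) (Icc 0 T) (Icc 0 1) := fun t ht =>
    ⟨div_nonneg ht.1 hT.le, (div_le_one hT).2 ht.2⟩
  refine ⟨?_, fun t ht x hx => ?_, fun hD t => by rw [hu t 0, mul_zero, hD, zero_mul]⟩
  · exact (ContinuousOn.comp_mul_exp_comp hw_cont (hJ_cont.comp (by fun_prop) hdivT)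
      (fun t ht => hJ_image ▸ mem_image_of_mem J (hdivT ht))
      (continuousOn_const.mul (continuousOn_primitive_of_continuousOn hq23))
      (Real.rpow_nonneg hT.le _)).congr fun p _ => hu p.1 p.2
  have hr : t / T ∈ Ioo (0:ℝ) 1 := ⟨div_pos ht.1 hT, (div_lt_one hT).2 ht.2⟩
  have hξ : 0 < T ^ (-(1:ℝ)/3) * x := mul_pos (Real.rpow_pos_of_pos hT _) hx
  have hq : q (J (t / T)) * (σ (t / T) ^ 2 / 2) = Q t := by
    rw [hqdef _ (Ioo_subset_Icc_self hr), div_mul_cancel₀ t hT.ne']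
    field_simp [(hσpos _ (Ioo_subset_Icc_self hr)).ne']
  exact airySubstitution_contDiffAt_and_hasDerivAt hT (hσ2pos _ (Ioo_subset_Icc_self hr))
    (hQpos t (Ioo_subset_Icc_self ht)).le (hJ_eq ▸ hasDerivAt_primitive_of_continuousOn hσ2 hr) hq
    (hasDerivAt_primitive_of_continuousOn hq23 (hJ_Ioo hr)) (hw_space _ (hJ_Ioo hr) _ hξ)
    (hw_pde _ (hJ_Ioo hr) _ hξ) hu

/-- Change of variables between the canonical Airy-type PDE
`∂_τ w = T^{1/3}(∂_ξ² w − q(τ)·ξ·w)` on `[0,J(1)]×[0,∞)` and the PDE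
`∂_t u = (σ(t/T)²/2)·∂_x² u + (−T⁻¹·Q(t)·x + T^{−2/3}·α₁·Q(t)^{2/3}·(σ(t/T)²/2)^{1/3})·u`
on `[0,T]×[0,∞)`, where `J(t) = ∫₀^t σ(s)²/2 ds`, `q(J(s)) = 2·Q(s·T)/σ(s)²`, `−α₁` is the
largest zero of `Ai`, and
`u(t,x) = w(J(t/T), T^{−1/3}·x)·exp(T^{1/3}·α₁·∫₀^{J(t/T)} q(s)^{2/3} ds)`.
Classical solutions are continuous on the closed rectangle, `C¹` in time and `C²` in space in
the interior, and satisfy the equation pointwise; moreover the Dirichlet boundary condition is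
transported from `w` to `u`. -/
theorem airy_pde_change_of_variables
    (α₁ : ℝ) (hα₁ : 0 < α₁) (hzero : Ai (-α₁) = 0)
    (hlargest : ∀ x : ℝ, -α₁ < x → Ai x ≠ 0)
    (T : ℝ) (hT : 0 < T)
    (σ : ℝ → ℝ) (hσ : ContDiffOn ℝ 2 σ (Set.Icc 0 1))
    (hσpos : ∀ s ∈ Set.Icc (0:ℝ) 1, 0 < σ s)
    (Q : ℝ → ℝ) (hQ : ContDiffOn ℝ 1 Q (Set.Icc 0 T))
    (hQpos : ∀ t ∈ Set.Icc (0:ℝ) T, 0 < Q t)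
    (J : ℝ → ℝ) (hJ : ∀ t : ℝ, J t = ∫ s in (0:ℝ)..t, σ s ^ 2 / 2)
    (q : ℝ → ℝ) (hqdef : ∀ s ∈ Set.Icc (0:ℝ) 1, q (J s) = 2 * Q (s * T) / σ s ^ 2)
    (w : ℝ → ℝ → ℝ)
    -- `w` is a classical solution of `∂_τ w = T^{1/3}(∂_ξ² w − q(τ)·ξ·w)`:
    (hw_cont : ContinuousOn (fun p : ℝ × ℝ => w p.1 p.2) (Set.Icc 0 (J 1) ×ˢ Set.Ici 0))
    (hw_space : ∀ τ ∈ Set.Ioo (0:ℝ) (J 1), ∀ ξ ∈ Set.Ioi (0:ℝ), ContDiffAt ℝ 2 (w τ) ξ)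
    (hw_pde : ∀ τ ∈ Set.Ioo (0:ℝ) (J 1), ∀ ξ ∈ Set.Ioi (0:ℝ),
      HasDerivAt (fun s => w s ξ)
        (T ^ ((1:ℝ)/3) * (deriv (deriv (w τ)) ξ - q τ * ξ * w τ ξ)) τ)
    (u : ℝ → ℝ → ℝ)
    (hu : ∀ t x : ℝ, u t x =
      w (J (t / T)) (T ^ (-(1:ℝ)/3) * x) *
        Real.exp (T ^ ((1:ℝ)/3) * α₁ * ∫ s in (0:ℝ)..(J (t / T)), q s ^ ((2:ℝ)/3))) :
    -- `u` is a classical solution of the transformed PDE: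
    ContinuousOn (fun p : ℝ × ℝ => u p.1 p.2) (Set.Icc 0 T ×ˢ Set.Ici 0) ∧
    (∀ t ∈ Set.Ioo (0:ℝ) T, ∀ x ∈ Set.Ioi (0:ℝ),
      ContDiffAt ℝ 2 (u t) x ∧
      HasDerivAt (fun s => u s x)
        (σ (t / T) ^ 2 / 2 * deriv (deriv (u t)) x
          + (-(T⁻¹ * Q t * x)
              + T ^ (-(2:ℝ)/3) * α₁ * Q t ^ ((2:ℝ)/3) * (σ (t / T) ^ 2 / 2) ^ ((1:ℝ)/3))
            * u t x) t) ∧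
    ((∀ τ : ℝ, w τ 0 = 0) → ∀ t : ℝ, u t 0 = 0) :=
  airy_pde_change_of_variables_general α₁ T hT σ hσ hσpos Q hQ hQpos J hJ q hqdef w hw_cont hw_space
    hw_pde u hu
end
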